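/- arXiv:1207.2212 — 2 statements merged into one kernel-verified Lean document; each statement's English description precedes it below -/
import Mathlib

section
/- Let f be differentiable on I° with f' integrable on [a,b], a < b, q > 1 with 1/p+1/q = 1, and |f'|^q concave on [a,b]. Then |(f(a)+f(b))/2 - (1/(b-a))∫ₐᵇ f(x)dx| ≤ ((b-a)/2)(1/(p+1))^{1/p}|f'((a+b)/2)| and |f((a+b)/2) - (1/(b-a))∫ₐᵇ f(x)dx| ≤ ((b-a)/2)(1/(p+1))^{1/p}|f'((a+b)/2)|. -/
/-!
Since `t ↦ t ^ (1/q)` is concave and increasing, concavity of `|f'|^q` makes `|f'|` itself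
concave, so `|f'(x)| + |f'(a + b - x)| ≤ 2 |f'(m)|` with `m` the midpoint. Integrating by parts,
both errors are integrals of `f'` against a Peano kernel whose absolute value is symmetric about
`m` and has integral `(b - a)² / 4`; pairing `x` with `a + b - x` (Fejér's inequality) bounds them
by `(b - a)² / 4 · |f'(m)|`. Bernoulli's inequality `p + 1 ≤ 2 ^ p` gives
`1 / 2 ≤ (1 / (p + 1)) ^ (1 / p)` for `p ≥ 1`, which turns this into the stated bound.
-/

open MeasureTheory Set intervalIntegral

lemma ConcaveOn.of_rpow {s : Set ℝ} {g : ℝ → ℝ} {q : ℝ} (hq : 1 ≤ q) (hg : ∀ x ∈ s, 0 ≤ g x)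
    (h : ConcaveOn ℝ s fun x => g x ^ q) : ConcaveOn ℝ s g := by
  have hq0 : 0 < q := by linarith
  have hroot := Real.concaveOn_rpow (by positivity : 0 ≤ 1 / q) (div_le_one_of_le₀ hq hq0.le)
  have hinv : ∀ x ∈ s, (g x ^ q) ^ (1 / q) = g x := fun x hx => by
    rw [one_div, Real.rpow_rpow_inv (hg x hx) hq0.ne']
  refine ⟨h.1, fun x hx y hy α β hα hβ hαβ => ?_⟩
  have hxy := h.1 hx hy hα hβ hαβ
  calc α • g x + β • g y
      = α • (g x ^ q) ^ (1 / q) + β • (g y ^ q) ^ (1 / q) := by rw [hinv x hx, hinv y hy]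
    _ ≤ (α • g x ^ q + β • g y ^ q) ^ (1 / q) :=
        hroot.2 (Real.rpow_nonneg (hg x hx) q) (Real.rpow_nonneg (hg y hy) q) hα hβ hαβ
    _ ≤ (g (α • x + β • y) ^ q) ^ (1 / q) :=
        Real.rpow_le_rpow (by have := hg x hx; have := hg y hy; positivity) (h.2 hx hy hα hβ hαβ)
          (by positivity)
    _ = g (α • x + β • y) := hinv _ hxy

lemma ConcaveOn.add_reflect_le {a b : ℝ} {h : ℝ → ℝ} (hh : ConcaveOn ℝ (Icc a b) h)
    {x : ℝ} (hx : x ∈ Icc a b) : h x + h (a + b - x) ≤ 2 * h ((a + b) / 2) := by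
  have hx' : a + b - x ∈ Icc a b := ⟨by linarith [hx.2], by linarith [hx.1]⟩
  have := hh.2 hx hx' (by norm_num : (0 : ℝ) ≤ 1 / 2) (by norm_num : (0 : ℝ) ≤ 1 / 2) (by norm_num)
  simp only [smul_eq_mul] at this
  rw [show 1 / 2 * x + 1 / 2 * (a + b - x) = (a + b) / 2 by ring] at this
  linarith

/-- Fejér's inequality for concave functions. -/
lemma ConcaveOn.intervalIntegral_mul_le {a b : ℝ} {h k : ℝ → ℝ} (hab : a ≤ b)
    (hh : ConcaveOn ℝ (Icc a b) h) (hhi : IntervalIntegrable h volume a b) (hk : Continuous k)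
    (hk0 : ∀ x ∈ Icc a b, 0 ≤ k x) (hsym : ∀ x, k (a + b - x) = k x) :
    ∫ x in a..b, k x * h x ≤ h ((a + b) / 2) * ∫ x in a..b, k x := by
  have hkh : IntervalIntegrable (fun x => k x * h x) volume a b :=
    hhi.continuousOn_mul hk.continuousOn
  have hreflect : ∫ x in a..b, k x * h (a + b - x) = ∫ x in a..b, k x * h x := by
    simpa [hsym] using integral_comp_sub_left (fun x => k x * h x) (a + b) (a := a) (b := b)
  have hkh' : IntervalIntegrable (fun x => k x * h (a + b - x)) volume a b := by
    simpa [hsym] using (hkh.comp_sub_left (a + b)).symm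
  have hsum : ∫ x in a..b, k x * h x + k x * h (a + b - x)
      ≤ ∫ x in a..b, 2 * h ((a + b) / 2) * k x :=
    integral_mono_on hab (hkh.add hkh') ((hk.intervalIntegrable a b).const_mul _) fun x hx => by
      nlinarith [hh.add_reflect_le hx, hk0 x hx]
  rw [integral_add hkh hkh', hreflect, intervalIntegral.integral_const_mul] at hsum
  linarith

lemma integral_abs_sub_midpoint {a b : ℝ} (hab : a ≤ b) :
    ∫ x in a..b, |x - (a + b) / 2| = (b - a) ^ 2 / 4 := by
  have hm : a ≤ (a + b) / 2 := by linarith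
  have hm' : (a + b) / 2 ≤ b := by linarith
  set m := (a + b) / 2
  have hc : Continuous fun x : ℝ => |x - m| := by fun_prop
  have hleft : ∫ x in a..m, |x - m| = ∫ x in a..m, (m - x) := integral_congr fun x hx => by
    rw [uIcc_of_le hm] at hx; simp [abs_of_nonpos (sub_nonpos.2 hx.2)]
  have hright : ∫ x in m..b, |x - m| = ∫ x in m..b, (x - m) := integral_congr fun x hx => by
    rw [uIcc_of_le hm'] at hx; simp [abs_of_nonneg (sub_nonneg.2 hx.1)]
  rw [← integral_add_adjacent_intervals (hc.intervalIntegrable a m) (hc.intervalIntegrable m b),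
    hleft, hright, intervalIntegral.integral_sub intervalIntegrable_const intervalIntegrable_id,
    intervalIntegral.integral_sub intervalIntegrable_id intervalIntegrable_const]
  simp only [intervalIntegral.integral_const, integral_id, smul_eq_mul, m]
  ring

lemma integral_sub_mul_deriv_eq {f f' : ℝ → ℝ} {c d : ℝ} (e : ℝ)
    (hf : ∀ x ∈ uIcc c d, HasDerivAt f (f' x) x) (hf' : IntervalIntegrable f' volume c d) :
    ∫ x in c..d, (x - e) * f' x = (d - e) * f d - (c - e) * f c - ∫ x in c..d, f x := by
  simpa using integral_mul_deriv_eq_deriv_mul (fun x _ => (hasDerivAt_id x).sub_const e) hf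
    intervalIntegrable_const hf'

lemma abs_intervalIntegral_mul_le {g k φ : ℝ → ℝ} {c d : ℝ} (hcd : c ≤ d)
    (hgk : ∀ x ∈ Icc c d, |g x| = k x) :
    |∫ x in c..d, g x * φ x| ≤ ∫ x in c..d, k x * |φ x| := by
  refine (abs_integral_le_integral_abs hcd).trans_eq (integral_congr fun x hx => ?_)
  rw [uIcc_of_le hcd] at hx
  simp only [abs_mul, hgk x hx]

/-- The Peano kernel of the midpoint rule: `|x - a|` on `[a, m]` and `|x - b|` on `[m, b]`. -/
noncomputable def midpointKernel (a b x : ℝ) : ℝ := (b - a) / 2 - |x - (a + b) / 2|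

section DerivativeBounds

variable {f f' : ℝ → ℝ} {a b : ℝ}

lemma continuous_midpointKernel : Continuous (midpointKernel a b) := by
  unfold midpointKernel; fun_prop

lemma midpointKernel_nonneg {x : ℝ} (hx : x ∈ Icc a b) : 0 ≤ midpointKernel a b x :=
  sub_nonneg.2 <| abs_le.2 ⟨by linarith [hx.1], by linarith [hx.2]⟩

lemma midpointKernel_reflect (x : ℝ) : midpointKernel a b (a + b - x) = midpointKernel a b x := by
  simp only [midpointKernel]; rw [← abs_neg]; ring_nf

lemma abs_sub_left_eq_midpointKernel {x : ℝ} (hx : x ∈ Icc a ((a + b) / 2)) :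
    |x - a| = midpointKernel a b x := by
  rw [midpointKernel, abs_of_nonneg (by linarith [hx.1]), abs_of_nonpos (by linarith [hx.2])]
  ring

lemma abs_sub_right_eq_midpointKernel {x : ℝ} (hx : x ∈ Icc ((a + b) / 2) b) :
    |x - b| = midpointKernel a b x := by
  rw [midpointKernel, abs_of_nonpos (by linarith [hx.2]), abs_of_nonneg (by linarith [hx.1])]
  ring

lemma integral_midpointKernel (hab : a ≤ b) :
    ∫ x in a..b, midpointKernel a b x = (b - a) ^ 2 / 4 := by
  simp only [midpointKernel]
  rw [intervalIntegral.integral_sub intervalIntegrable_const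
    ((show Continuous fun x => |x - (a + b) / 2| by fun_prop).intervalIntegrable a b),
    integral_abs_sub_midpoint hab, intervalIntegral.integral_const, smul_eq_mul]
  ring

lemma abs_trapezoid_sub_integral_le (hab : a ≤ b) (hf : ∀ x ∈ Icc a b, HasDerivAt f (f' x) x)
    (hf' : IntervalIntegrable f' volume a b) (hconc : ConcaveOn ℝ (Icc a b) fun x => |f' x|) :
    |(b - a) * ((f a + f b) / 2) - ∫ x in a..b, f x| ≤ (b - a) ^ 2 / 4 * |f' ((a + b) / 2)| := by
  have hibp := integral_sub_mul_deriv_eq ((a + b) / 2) (by rwa [uIcc_of_le hab]) hf'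
  calc |(b - a) * ((f a + f b) / 2) - ∫ x in a..b, f x|
      = |∫ x in a..b, (x - (a + b) / 2) * f' x| := by rw [hibp]; ring_nf
    _ ≤ ∫ x in a..b, |x - (a + b) / 2| * |f' x| := abs_intervalIntegral_mul_le hab fun _ _ => rfl
    _ ≤ |f' ((a + b) / 2)| * ∫ x in a..b, |x - (a + b) / 2| :=
        hconc.intervalIntegral_mul_le hab hf'.abs (by fun_prop) (fun _ _ => abs_nonneg _)
          fun x => by rw [← abs_neg]; ring_nf
    _ = (b - a) ^ 2 / 4 * |f' ((a + b) / 2)| := by rw [integral_abs_sub_midpoint hab]; ring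

lemma abs_midpoint_sub_integral_le (hab : a ≤ b) (hf : ∀ x ∈ Icc a b, HasDerivAt f (f' x) x)
    (hf' : IntervalIntegrable f' volume a b) (hconc : ConcaveOn ℝ (Icc a b) fun x => |f' x|) :
    |(b - a) * f ((a + b) / 2) - ∫ x in a..b, f x| ≤ (b - a) ^ 2 / 4 * |f' ((a + b) / 2)| := by
  have ham : a ≤ (a + b) / 2 := by linarith
  have hmb : (a + b) / 2 ≤ b := by linarith
  set m := (a + b) / 2
  set k := midpointKernel a b
  have hsub_left : uIcc a m ⊆ Icc a b := by rw [uIcc_of_le ham]; exact Icc_subset_Icc le_rfl hmb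
  have hsub_right : uIcc m b ⊆ Icc a b := by rw [uIcc_of_le hmb]; exact Icc_subset_Icc ham le_rfl
  have hfi : ∀ {c d}, uIcc c d ⊆ Icc a b → IntervalIntegrable f volume c d := fun hsub =>
    ContinuousOn.intervalIntegrable fun x hx => (hf x (hsub hx)).continuousAt.continuousWithinAt
  have hkfi : ∀ {c d}, uIcc c d ⊆ Icc a b →
      IntervalIntegrable (fun x => k x * |f' x|) volume c d := fun hsub =>
    (hf'.abs.mono_set (by rwa [uIcc_of_le hab])).continuousOn_mul
      continuous_midpointKernel.continuousOn
  have hibp_left := integral_sub_mul_deriv_eq a (fun x hx => hf x (hsub_left hx))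
    (hf'.mono_set (by rwa [uIcc_of_le hab]))
  have hibp_right := integral_sub_mul_deriv_eq b (fun x hx => hf x (hsub_right hx))
    (hf'.mono_set (by rwa [uIcc_of_le hab]))
  calc |(b - a) * f m - ∫ x in a..b, f x|
      = |(∫ x in a..m, (x - a) * f' x) + ∫ x in m..b, (x - b) * f' x| := by
        rw [hibp_left, hibp_right, ← integral_add_adjacent_intervals (hfi hsub_left)
          (hfi hsub_right)]
        ring_nf
    _ ≤ |∫ x in a..m, (x - a) * f' x| + |∫ x in m..b, (x - b) * f' x| := abs_add_le _ _
    _ ≤ (∫ x in a..m, k x * |f' x|) + ∫ x in m..b, k x * |f' x| :=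
        add_le_add (abs_intervalIntegral_mul_le ham fun _ => abs_sub_left_eq_midpointKernel)
          (abs_intervalIntegral_mul_le hmb fun _ => abs_sub_right_eq_midpointKernel)
    _ = ∫ x in a..b, k x * |f' x| :=
        integral_add_adjacent_intervals (hkfi hsub_left) (hkfi hsub_right)
    _ ≤ |f' m| * ∫ x in a..b, k x :=
        hconc.intervalIntegral_mul_le hab hf'.abs continuous_midpointKernel
          (fun _ => midpointKernel_nonneg) midpointKernel_reflect
    _ = (b - a) ^ 2 / 4 * |f' m| := by rw [integral_midpointKernel hab]; ring

end DerivativeBounds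

lemma half_le_one_div_add_one_rpow {p : ℝ} (hp : 1 ≤ p) : 1 / 2 ≤ (1 / (p + 1)) ^ (1 / p) := by
  have hbernoulli : p + 1 ≤ (2 : ℝ) ^ p := by
    simpa [add_comm, one_add_one_eq_two] using
      one_add_mul_self_le_rpow_one_add (s := 1) (by norm_num) hp
  have hroot : (p + 1) ^ (1 / p) ≤ 2 := by
    calc (p + 1) ^ (1 / p) ≤ ((2 : ℝ) ^ p) ^ (1 / p) :=
          Real.rpow_le_rpow (by positivity) hbernoulli (by positivity)
      _ = 2 := by rw [← Real.rpow_mul (by norm_num), mul_one_div_cancel (by positivity),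
          Real.rpow_one]
  rw [Real.div_rpow zero_le_one (by positivity), Real.one_rpow]
  exact one_div_le_one_div_of_le (by positivity) hroot

lemma abs_sub_one_div_mul_le {a b t Z M c : ℝ} (hab : a < b) (hM : 0 ≤ M) (hc : 1 / 2 ≤ c)
    (h : |(b - a) * t - Z| ≤ (b - a) ^ 2 / 4 * M) :
    |t - 1 / (b - a) * Z| ≤ (b - a) / 2 * c * M := by
  have hba : 0 < b - a := sub_pos.2 hab
  rw [show t - 1 / (b - a) * Z = ((b - a) * t - Z) / (b - a) by field_simp, abs_div,
    abs_of_pos hba, div_le_iff₀ hba]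
  nlinarith [mul_nonneg (mul_nonneg hba.le hba.le) hM]

theorem stmt_16 (I : Set ℝ) (f f' : ℝ → ℝ) (a b p q : ℝ)
    (hab : a < b) (hI : Set.Icc a b ⊆ interior I)
    (hq : 1 < q) (hpq : 1/p + 1/q = 1)
    (hder : ∀ x ∈ interior I, HasDerivAt f (f' x) x)
    (hint : IntervalIntegrable f' volume a b)
    (hconc : ConcaveOn ℝ (Set.Icc a b) (fun x => |f' x| ^ q)) :
    |(f a + f b)/2 - (1 / (b - a)) * ∫ x in a..b, f x|
        ≤ ((b - a)/2) * (1/(p+1)) ^ (1/p) * |f' ((a + b)/2)| ∧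
      |f ((a + b)/2) - (1 / (b - a)) * ∫ x in a..b, f x|
        ≤ ((b - a)/2) * (1/(p+1)) ^ (1/p) * |f' ((a + b)/2)| := by
  have hp : 1 < p :=
    (Real.holderConjugate_iff.mpr ⟨hq, by simpa [add_comm] using hpq⟩).symm.lt
  have hc := half_le_one_div_add_one_rpow hp.le
  have hf : ∀ x ∈ Icc a b, HasDerivAt f (f' x) x := fun x hx => hder x (hI hx)
  have habs := hconc.of_rpow hq.le fun x _ => abs_nonneg (f' x)
  exact ⟨abs_sub_one_div_mul_le hab (abs_nonneg _) hc
      (abs_trapezoid_sub_integral_le hab.le hf hint habs),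
    abs_sub_one_div_mul_le hab (abs_nonneg _) hc
      (abs_midpoint_sub_integral_le hab.le hf hint habs)⟩
end

section
/- Let 0 < a < b, q ≥ 1, s ∈ (0, 1/q), and let A_α(x,y) = αx + (1-α)y denote the weighted arithmetic mean and L_{s+1}(a,b) = ((b^{s+2}-a^{s+2})/((s+2)(b-a)))^{1/(s+1)} denote the (s+1)-logarithmic mean. If αλ ≤ 1-α ≤ 1-λ(1-α) with α,λ ∈ [0,1], then |λ A_α(a^{s+1}, b^{s+1}) + (1-λ) A_α(a,b)^{s+1} - L_{s+1}(a,b)^{s+1}| ≤ (b-a)(s+1){γ₂^{1-1/q}(μ₁* b^{sq} + μ₂* a^{sq})^{1/q} + υ₂^{1-1/q}(η₃* b^{sq} + η₄* a^{sq})^{1/q}}, where γ₂ = (αλ)² - (1-α)(αλ-(1-α)/2), υ₂ = (1+(1-α)²)/2 - (λ+1)(1-α)(1-λ(1-α)), μ₁* = (αλ)^{sq+2}·2/((sq+1)(sq+2)) - αλ(1-α)^{sq+1}/(sq+1) + (1-α)^{sq+2}/(sq+2), μ₂* = (1-αλ)^{sq+2}·2/((sq+1)(sq+2)) - (1-αλ)(1+α^{sq+1})/(sq+1)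 + (1+α^{sq+2})/(sq+2), η₃* = 2(1-λ(1-α))^{sq+2}/((sq+1)(sq+2)) - (1+(1-α)^{sq+1})(1-λ(1-α))/(sq+1) + (1+(1-α)^{sq+2})/(sq+2), η₄* = (λ(1-α))^{sq+2}·2/((sq+1)(sq+2)) - λ(1-α)α^{sq+1}/(sq+1) + α^{sq+2}/(sq+2). -/
/-!
With `g t = (t * b + (1 - t) * a) ^ s`, integrating by parts against the kernels `t - α λ` on
`[0, 1 - α]` and `t - (1 - λ (1 - α))` on `[1 - α, 1]` writes the left-hand side as
`(b - a) (s + 1)` times the sum of `∫ (t - c) g t` over the two pieces. On each piece the weighted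
power-mean (Hölder) inequality with weight `|t - c|`, followed by the `sq`-convexity estimate
`(t b + (1 - t) a) ^ (sq) ≤ t ^ (sq) b ^ (sq) + (1 - t) ^ (sq) a ^ (sq)` (valid as `sq ≤ 1`),
reduces the bound to the moments `∫ |t - c| t ^ r` and `∫ |t - c| (1 - t) ^ r`, which are
elementary; the constants `γ₂, μ₁*, …, η₄*` are exactly these moments.
-/

open MeasureTheory Set

lemma rpow_mul_add_one_sub_mul_le {a b t p : ℝ} (ha : 0 ≤ a) (hb : 0 ≤ b) (ht₀ : 0 ≤ t)
    (ht₁ : t ≤ 1) (hp₀ : 0 ≤ p) (hp₁ : p ≤ 1) :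
    (t * b + (1 - t) * a) ^ p ≤ t ^ p * b ^ p + (1 - t) ^ p * a ^ p := by
  rw [← Real.mul_rpow ht₀ hb, ← Real.mul_rpow (sub_nonneg.2 ht₁) ha]
  exact Real.rpow_add_le_add_rpow (mul_nonneg ht₀ hb) (mul_nonneg (sub_nonneg.2 ht₁) ha)
    hp₀ hp₁

lemma integral_mul_le_weight_mul_Lp {w g : ℝ → ℝ} {x y q : ℝ} (hxy : x ≤ y) (hq : 1 ≤ q)
    (hw : Continuous w) (hg : Continuous g) (hw₀ : ∀ t ∈ Icc x y, 0 ≤ w t)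
    (hg₀ : ∀ t ∈ Icc x y, 0 ≤ g t) :
    ∫ t in x..y, w t * g t
      ≤ (∫ t in x..y, w t) ^ (1 - 1 / q) * (∫ t in x..y, w t * g t ^ q) ^ (1 / q) := by
  rcases hq.eq_or_lt with rfl | hq
  · simp
  obtain ⟨p, hpq⟩ : ∃ p : ℝ, p.HolderConjugate q :=
    ⟨_, (Real.HolderConjugate.conjExponent hq).symm⟩
  have hpq_sum : 1 / p + 1 / q = 1 := by simpa only [one_div] using hpq.inv_add_inv_eq_one
  have hq₀ : 0 < q := hpq.symm.pos
  set μ := volume.restrict (Ioc x y)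
  have hμ : ∀ {P : ℝ → Prop}, (∀ t ∈ Icc x y, P t) → ∀ᵐ t ∂μ, P t := fun h =>
    (ae_restrict_iff' measurableSet_Ioc).2 (ae_of_all _ fun t ht => h t (Ioc_subset_Icc_self ht))
  have memLp (f : ℝ → ℝ) (hf : Continuous f) (e : ℝ) : MemLp f (ENNReal.ofReal e) μ := by
    obtain ⟨C, hC⟩ := (isCompact_Icc (a := x) (b := y)).exists_bound_of_continuousOn
      hf.continuousOn
    exact MemLp.of_bound hf.aestronglyMeasurable.restrict C (hμ hC)
  have hholder := integral_mul_le_Lp_mul_Lq_of_nonneg (μ := μ) hpq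
    (f := fun t => w t ^ (1 / p)) (g := fun t => w t ^ (1 / q) * g t)
    (hμ fun t ht => Real.rpow_nonneg (hw₀ t ht) _)
    (hμ fun t ht => mul_nonneg (Real.rpow_nonneg (hw₀ t ht) _) (hg₀ t ht))
    (memLp _ ((Real.continuous_rpow_const hpq.one_div_nonneg).comp hw) p)
    (memLp _ (((Real.continuous_rpow_const hpq.symm.one_div_nonneg).comp hw).mul hg) q)
  have hprod : ∫ t, w t ^ (1 / p) * (w t ^ (1 / q) * g t) ∂μ = ∫ t, w t * g t ∂μ := by
    refine integral_congr_ae (hμ fun t ht => ?_)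
    dsimp only
    rw [← mul_assoc, ← Real.rpow_add' (hw₀ t ht) (by rw [hpq_sum]; norm_num),
      hpq_sum, Real.rpow_one]
  have hleft : ∫ t, (w t ^ (1 / p)) ^ p ∂μ = ∫ t, w t ∂μ := by
    refine integral_congr_ae (hμ fun t ht => ?_)
    dsimp only
    rw [← Real.rpow_mul (hw₀ t ht), one_div_mul_cancel hpq.pos.ne', Real.rpow_one]
  have hright : ∫ t, (w t ^ (1 / q) * g t) ^ q ∂μ = ∫ t, w t * g t ^ q ∂μ := by
    refine integral_congr_ae (hμ fun t ht => ?_)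
    dsimp only
    rw [Real.mul_rpow (Real.rpow_nonneg (hw₀ t ht) _) (hg₀ t ht), ← Real.rpow_mul (hw₀ t ht),
      one_div_mul_cancel hq₀.ne', Real.rpow_one]
  rw [hprod, hleft, hright, eq_sub_of_add_eq hpq_sum] at hholder
  simpa only [intervalIntegral.integral_of_le hxy] using hholder

noncomputable def rpowPrimitive (r c t : ℝ) : ℝ :=
  t ^ (r + 2) / (r + 2) - c * t ^ (r + 1) / (r + 1)

noncomputable def absMoment (r c x y : ℝ) : ℝ :=
  2 * c ^ (r + 2) / ((r + 1) * (r + 2)) + rpowPrimitive r c x + rpowPrimitive r c y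

lemma hasDerivAt_rpowPrimitive {r c t : ℝ} (hr : 0 ≤ r) (ht : 0 ≤ t) :
    HasDerivAt (rpowPrimitive r c) ((t - c) * t ^ r) t := by
  have h₂ := Real.hasDerivAt_rpow_const (x := t) (p := r + 2) (Or.inr (by linarith))
  have h₁ := Real.hasDerivAt_rpow_const (x := t) (p := r + 1) (Or.inr (by linarith))
  refine ((h₂.div_const (r + 2)).sub ((h₁.const_mul c).div_const (r + 1))).congr_deriv ?_
  rw [show r + 2 - 1 = r + 1 by ring, add_sub_cancel_right, Real.rpow_add_one' ht (by linarith)]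
  field_simp

lemma integral_sub_mul_rpow {r c x y : ℝ} (hr : 0 ≤ r) (hx : 0 ≤ x) (hxy : x ≤ y) :
    ∫ t in x..y, (t - c) * t ^ r = rpowPrimitive r c y - rpowPrimitive r c x := by
  refine intervalIntegral.integral_eq_sub_of_hasDerivAt
    (fun t ht => hasDerivAt_rpowPrimitive hr ?_) ?_
  · rw [uIcc_of_le hxy] at ht
    exact hx.trans ht.1
  · exact ((continuous_id.sub continuous_const).mul
      (Real.continuous_rpow_const hr)).intervalIntegrable _ _

lemma rpowPrimitive_self {r c : ℝ} (hr : 0 ≤ r) (hc : 0 ≤ c) :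
    rpowPrimitive r c c = -(c ^ (r + 2) / ((r + 1) * (r + 2))) := by
  rw [rpowPrimitive, show r + 2 = r + 1 + 1 by ring, Real.rpow_add_one' hc (by linarith)]
  field_simp
  ring

lemma integral_abs_sub_mul_rpow {r c x y : ℝ} (hr : 0 ≤ r) (hx : 0 ≤ x) (hxc : x ≤ c)
    (hcy : c ≤ y) :
    ∫ t in x..y, |t - c| * t ^ r = absMoment r c x y := by
  have hcont : Continuous fun t : ℝ => |t - c| * t ^ r :=
    (continuous_id.sub continuous_const).abs.mul (Real.continuous_rpow_const hr)
  have hleft : ∫ t in x..c, |t - c| * t ^ r = -∫ t in x..c, (t - c) * t ^ r := by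
    rw [← intervalIntegral.integral_neg]
    refine intervalIntegral.integral_congr fun t ht => ?_
    rw [uIcc_of_le hxc] at ht
    simp only [abs_of_nonpos (sub_nonpos.2 ht.2), neg_mul]
  have hright : ∫ t in c..y, |t - c| * t ^ r = ∫ t in c..y, (t - c) * t ^ r := by
    refine intervalIntegral.integral_congr fun t ht => ?_
    rw [uIcc_of_le hcy] at ht
    simp only [abs_of_nonneg (sub_nonneg.2 ht.1)]
  rw [← intervalIntegral.integral_add_adjacent_intervals (hcont.intervalIntegrable x c)
    (hcont.intervalIntegrable c y), hleft, hright, integral_sub_mul_rpow hr hx hxc,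
    integral_sub_mul_rpow hr (hx.trans hxc) hcy, rpowPrimitive_self hr (hx.trans hxc), absMoment]
  ring

lemma integral_abs_sub_mul_one_sub_rpow {r c x y : ℝ} (hr : 0 ≤ r) (hxc : x ≤ c) (hcy : c ≤ y)
    (hy : y ≤ 1) :
    ∫ t in x..y, |t - c| * (1 - t) ^ r = absMoment r (1 - c) (1 - y) (1 - x) := by
  have hreflect (t : ℝ) : |t - c| * (1 - t) ^ r = |(1 - t) - (1 - c)| * (1 - t) ^ r := by
    rw [show (1 - t) - (1 - c) = -(t - c) by ring, abs_neg]
  simp_rw [hreflect]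
  rw [intervalIntegral.integral_comp_sub_left (fun u => |u - (1 - c)| * u ^ r) 1]
  exact integral_abs_sub_mul_rpow hr (by linarith) (by linarith) (by linarith)

noncomputable def kernelPrimitive (a b s c t : ℝ) : ℝ :=
  (t - c) * (t * b + (1 - t) * a) ^ (s + 1)
    - (t * b + (1 - t) * a) ^ (s + 2) / ((s + 2) * (b - a))

lemma integral_sub_mul_lineMap_rpow {a b s c x y : ℝ} (hab : a ≠ b) (hs : 0 ≤ s) :
    ∫ t in x..y, (t - c) * (t * b + (1 - t) * a) ^ s
      = (kernelPrimitive a b s c y - kernelPrimitive a b s c x) / ((s + 1) * (b - a)) := by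
  have hba : b - a ≠ 0 := sub_ne_zero.2 hab.symm
  rw [eq_div_iff (mul_ne_zero (by positivity) hba),
    ← intervalIntegral.integral_mul_const ((s + 1) * (b - a))]
  refine intervalIntegral.integral_eq_sub_of_hasDerivAt (fun t _ => ?_) ?_
  · have hv : HasDerivAt (fun u : ℝ => u * b + (1 - u) * a) (b - a) t :=
      (((hasDerivAt_id' t).mul_const b).add
        (((hasDerivAt_id' t).const_sub 1).mul_const a)).congr_deriv (by ring)
    have h₁ := hv.rpow_const (p := s + 1) (Or.inr (by linarith))
    have h₂ := hv.rpow_const (p := s + 2) (Or.inr (by linarith))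
    refine ((((hasDerivAt_id' t).sub_const c).mul h₁).sub
      (h₂.div_const ((s + 2) * (b - a)))).congr_deriv ?_
    rw [show s + 2 - 1 = s + 1 by ring, add_sub_cancel_right]
    field_simp
    ring
  · exact (((continuous_id.sub continuous_const).mul ((Real.continuous_rpow_const hs).comp
      (by fun_prop))).mul continuous_const).intervalIntegrable _ _

lemma mean_combination_sub_integral_mean_eq {a b s : ℝ} (hab : a ≠ b) (hs : 0 ≤ s) (α l : ℝ) :
    l * (α * a ^ (s + 1) + (1 - α) * b ^ (s + 1)) + (1 - l) * (α * a + (1 - α) * b) ^ (s + 1)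
        - (b ^ (s + 2) - a ^ (s + 2)) / ((s + 2) * (b - a))
      = (b - a) * (s + 1) *
        ((∫ t in (0 : ℝ)..1 - α, (t - α * l) * (t * b + (1 - t) * a) ^ s)
          + ∫ t in 1 - α..1, (t - (1 - l * (1 - α))) * (t * b + (1 - t) * a) ^ s) := by
  have hba : b - a ≠ 0 := sub_ne_zero.2 hab.symm
  rw [integral_sub_mul_lineMap_rpow hab hs, integral_sub_mul_lineMap_rpow hab hs]
  simp only [kernelPrimitive]
  rw [show (0 : ℝ) * b + (1 - 0) * a = a by ring, show (1 : ℝ) * b + (1 - 1) * a = b by ring,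
    show (1 - α) * b + (1 - (1 - α)) * a = α * a + (1 - α) * b by ring]
  field_simp
  ring

lemma abs_integral_sub_mul_lineMap_rpow_le {a b s q c x y : ℝ} (ha : 0 ≤ a) (hb : 0 ≤ b)
    (hs : 0 ≤ s) (hq : 1 ≤ q) (hsq : s * q ≤ 1) (hx : 0 ≤ x) (hxc : x ≤ c) (hcy : c ≤ y)
    (hy : y ≤ 1) :
    |∫ t in x..y, (t - c) * (t * b + (1 - t) * a) ^ s|
      ≤ absMoment 0 c x y ^ (1 - 1 / q) *
        (absMoment (s * q) c x y * b ^ (s * q)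
          + absMoment (s * q) (1 - c) (1 - y) (1 - x) * a ^ (s * q)) ^ (1 / q) := by
  have hxy := hxc.trans hcy
  have hsq₀ : 0 ≤ s * q := mul_nonneg hs (by linarith)
  have hv : ∀ t ∈ Icc x y, 0 ≤ t * b + (1 - t) * a := fun t ht =>
    add_nonneg (mul_nonneg (hx.trans ht.1) hb) (mul_nonneg (by linarith [ht.2]) ha)
  have habs : Continuous fun t : ℝ => |t - c| := by fun_prop
  have hg : Continuous fun t : ℝ => (t * b + (1 - t) * a) ^ s :=
    (Real.continuous_rpow_const hs).comp (by fun_prop)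
  have hweight : ∫ t in x..y, |t - c| = absMoment 0 c x y := by
    simpa using integral_abs_sub_mul_rpow le_rfl hx hxc hcy
  have hmoment :
      ∫ t in x..y, |t - c| * (t ^ (s * q) * b ^ (s * q) + (1 - t) ^ (s * q) * a ^ (s * q))
      = absMoment (s * q) c x y * b ^ (s * q)
        + absMoment (s * q) (1 - c) (1 - y) (1 - x) * a ^ (s * q) := by
    simp only [mul_add, ← mul_assoc]
    rw [intervalIntegral.integral_add, intervalIntegral.integral_mul_const,
      intervalIntegral.integral_mul_const, integral_abs_sub_mul_rpow hsq₀ hx hxc hcy,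
      integral_abs_sub_mul_one_sub_rpow hsq₀ hxc hcy hy]
    · exact ((habs.mul (Real.continuous_rpow_const hsq₀)).mul
        continuous_const).intervalIntegrable _ _
    · exact ((habs.mul ((Real.continuous_rpow_const hsq₀).comp (by fun_prop))).mul
        continuous_const).intervalIntegrable _ _
  rw [← hweight, ← hmoment]
  calc |∫ t in x..y, (t - c) * (t * b + (1 - t) * a) ^ s|
      ≤ ∫ t in x..y, |t - c| * (t * b + (1 - t) * a) ^ s := by
        refine (intervalIntegral.abs_integral_le_integral_abs hxy).trans_eq
          (intervalIntegral.integral_congr fun t ht => ?_)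
        rw [uIcc_of_le hxy] at ht
        simp only [abs_mul, abs_of_nonneg (Real.rpow_nonneg (hv t ht) s)]
    _ ≤ (∫ t in x..y, |t - c|) ^ (1 - 1 / q) *
          (∫ t in x..y, |t - c| * ((t * b + (1 - t) * a) ^ s) ^ q) ^ (1 / q) :=
        integral_mul_le_weight_mul_Lp hxy hq habs hg (fun _ _ => abs_nonneg _)
          fun t ht => Real.rpow_nonneg (hv t ht) s
    _ ≤ _ := by
        refine mul_le_mul_of_nonneg_left (Real.rpow_le_rpow ?_ ?_ (by positivity))
          (Real.rpow_nonneg (intervalIntegral.integral_nonneg hxy fun _ _ => abs_nonneg _) _)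
        · exact intervalIntegral.integral_nonneg hxy fun t ht =>
            mul_nonneg (abs_nonneg _) (Real.rpow_nonneg (Real.rpow_nonneg (hv t ht) s) q)
        refine intervalIntegral.integral_mono_on hxy ?_ ?_ fun t ht => ?_
        · exact (habs.mul ((Real.continuous_rpow_const (by linarith)).comp
            hg)).intervalIntegrable _ _
        · exact (habs.mul (((Real.continuous_rpow_const hsq₀).mul continuous_const).add
            (((Real.continuous_rpow_const hsq₀).comp (by fun_prop)).mul
              continuous_const))).intervalIntegrable _ _
        rw [← Real.rpow_mul (hv t ht)]
        exact mul_le_mul_of_nonneg_left (rpow_mul_add_one_sub_mul_le ha hb (hx.trans ht.1)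
          (ht.2.trans hy) hsq₀ hsq) (abs_nonneg _)

theorem stmt_19 (a b s q α l γ₂ υ₂ μ₁ μ₂ η₃ η₄ : ℝ)
    (ha : 0 < a) (hab : a < b) (hq : 1 ≤ q) (hs : 0 < s) (hs' : s < 1/q)
    (hα : α ∈ Set.Icc (0:ℝ) 1) (hl : l ∈ Set.Icc (0:ℝ) 1)
    (hcase₁ : α * l ≤ 1 - α) (hcase₂ : 1 - α ≤ 1 - l * (1 - α))
    (hγ₂ : γ₂ = (α * l) ^ (2:ℕ) - (1 - α) * (α * l - (1 - α)/2))
    (hυ₂ : υ₂ = (1 + (1 - α) ^ (2:ℕ)) / 2 - (l + 1) * (1 - α) * (1 - l * (1 - α)))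
    (hμ₁ : μ₁ = (α * l) ^ (s*q+2) * (2 / ((s*q+1) * (s*q+2)))
        - (α * l) * (1 - α) ^ (s*q+1) / (s*q+1) + (1 - α) ^ (s*q+2) / (s*q+2))
    (hμ₂ : μ₂ = (1 - α * l) ^ (s*q+2) * (2 / ((s*q+1) * (s*q+2)))
        - (1 - α * l) * (1 + α ^ (s*q+1)) / (s*q+1) + (1 + α ^ (s*q+2)) / (s*q+2))
    (hη₃ : η₃ = 2 * (1 - l * (1 - α)) ^ (s*q+2) / ((s*q+1) * (s*q+2))
        - (1 + (1 - α) ^ (s*q+1)) * (1 - l * (1 - α)) / (s*q+1)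
        + (1 + (1 - α) ^ (s*q+2)) / (s*q+2))
    (hη₄ : η₄ = (l * (1 - α)) ^ (s*q+2) * (2 / ((s*q+1) * (s*q+2)))
        - l * (1 - α) * α ^ (s*q+1) / (s*q+1) + α ^ (s*q+2) / (s*q+2)) :
    |l * (α * a ^ (s+1) + (1 - α) * b ^ (s+1)) + (1 - l) * (α * a + (1 - α) * b) ^ (s+1)
        - (b ^ (s+2) - a ^ (s+2)) / ((s+2) * (b - a))|
      ≤ (b - a) * (s+1) *
        (γ₂ ^ (1 - 1/q) * (μ₁ * b ^ (s*q) + μ₂ * a ^ (s*q)) ^ (1/q)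
          + υ₂ ^ (1 - 1/q) * (η₃ * b ^ (s*q) + η₄ * a ^ (s*q)) ^ (1/q)) := by
  obtain ⟨hα₀, hα₁⟩ := hα
  obtain ⟨hl₀, -⟩ := hl
  have hsq : s * q ≤ 1 := ((lt_div_iff₀ (by linarith)).1 (by simpa using hs')).le
  have hsq₁ : s * q + 1 ≠ 0 := by nlinarith
  have hsq₂ : s * q + 2 ≠ 0 := by nlinarith
  have h₁ := abs_integral_sub_mul_lineMap_rpow_le ha.le (ha.trans hab).le hs.le hq hsq le_rfl
    (mul_nonneg hα₀ hl₀) hcase₁ (by linarith)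
  have h₂ := abs_integral_sub_mul_lineMap_rpow_le ha.le (ha.trans hab).le hs.le hq hsq
    (by linarith) hcase₂ (by nlinarith) le_rfl
  have hγ : absMoment 0 (α * l) 0 (1 - α) = γ₂ := by
    simp only [hγ₂, absMoment, rpowPrimitive, zero_add, Real.rpow_one, Real.rpow_two]; ring
  have hυ : absMoment 0 (1 - l * (1 - α)) (1 - α) 1 = υ₂ := by
    simp only [hυ₂, absMoment, rpowPrimitive, zero_add, Real.rpow_one, Real.rpow_two]; ring
  have hμ₁' : absMoment (s * q) (α * l) 0 (1 - α) = μ₁ := by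
    simp only [hμ₁, absMoment, rpowPrimitive, Real.zero_rpow hsq₁, Real.zero_rpow hsq₂]; ring
  have hμ₂' : absMoment (s * q) (1 - α * l) (1 - (1 - α)) (1 - 0) = μ₂ := by
    simp only [hμ₂, absMoment, rpowPrimitive, sub_sub_cancel, sub_zero, Real.one_rpow]; ring
  have hη₃' : absMoment (s * q) (1 - l * (1 - α)) (1 - α) 1 = η₃ := by
    simp only [hη₃, absMoment, rpowPrimitive, Real.one_rpow]; ring
  have hη₄' : absMoment (s * q) (1 - (1 - l * (1 - α))) (1 - 1) (1 - (1 - α)) = η₄ := by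
    simp only [hη₄, absMoment, rpowPrimitive, sub_sub_cancel, sub_self, Real.zero_rpow hsq₁,
      Real.zero_rpow hsq₂]; ring
  rw [hγ, hμ₁', hμ₂'] at h₁
  rw [hυ, hη₃', hη₄'] at h₂
  rw [mean_combination_sub_integral_mean_eq hab.ne hs.le, abs_mul,
    abs_of_nonneg (mul_nonneg (sub_nonneg.2 hab.le) (by linarith))]
  exact mul_le_mul_of_nonneg_left ((abs_add_le _ _).trans (add_le_add h₁ h₂))
    (mul_nonneg (sub_nonneg.2 hab.le) (by linarith))
end
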